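/- arXiv:1707.03246 — 3 statements merged into one kernel-verified Lean document; each statement's English description precedes it below -/
import Mathlib

section
/- Let S be the simplex in R^n with vertices e_1, ..., e_n and -(e_1+...+e_n). Then its polar body S° is the simplex with vertices v_0 = e_1+...+e_n and v_j = v_0 - (n+1)e_j for 1 ≤ j ≤ n, and vol(S°) = (n+1)^n / n!. -/
/-!
The polar of the convex hull of finitely many points is cut out by one half-space per point;
for the simplex `S` these are `xᵢ ≤ 1` and `-∑ xᵢ ≤ 1`. The affine map `y ↦ 𝟙 - (n+1) y`,
`𝟙 = e₁ + ⋯ + eₙ`, carries the corner simplex `{y ≥ 0, ∑ yᵢ ≤ 1} = conv {0, e₁, …, eₙ}` onto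
this set, sending `0` to `v₀` and `eⱼ` to `vⱼ`. Hence `S°` is the simplex `conv {v₀, …, vₙ}`,
and its volume is `(n+1)ⁿ` times that of the corner simplex, which is `1/n!` by integrating
out one coordinate at a time.
-/

open MeasureTheory

/-- The polar body `S° = {x : ⟨x, y⟩ ≤ 1 for all y ∈ S}`. -/
def polarBody {n : ℕ} (S : Set (EuclideanSpace ℝ (Fin n))) :
    Set (EuclideanSpace ℝ (Fin n)) :=
  {x | ∀ y ∈ S, (inner ℝ x y : ℝ) ≤ 1}

open Pointwise

section Polar

variable {n : ℕ}

theorem polarBody_convexHull (s : Set (EuclideanSpace ℝ (Fin n))) :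
    polarBody (convexHull ℝ s) = polarBody s := by
  refine subset_antisymm (fun x hx y hy => hx y (subset_convexHull ℝ s hy)) fun x hx y hy => ?_
  exact convexHull_min hx (convex_halfSpace_le (innerₛₗ ℝ x).isLinear 1) hy

theorem polarBody_range_snoc_single_neg_sum :
    polarBody (Set.range (Fin.snoc (fun i : Fin n => EuclideanSpace.single i (1 : ℝ))
        (-(∑ j : Fin n, EuclideanSpace.single j (1 : ℝ))))) =
      {x | (∀ i, x i ≤ 1) ∧ -∑ i, x i ≤ 1} := by
  ext x
  simp [polarBody, Fin.range_snoc, inner_sum, EuclideanSpace.inner_single_right, and_comm]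

end Polar

def cornerSimplex (ι : Type*) [Fintype ι] (r : ℝ) : Set (ι → ℝ) :=
  {y | (∀ i, 0 ≤ y i) ∧ ∑ i, y i ≤ r}

section Corner

variable {ι : Type*} [Fintype ι]

theorem measurableSet_cornerSimplex (r : ℝ) : MeasurableSet (cornerSimplex ι r) := by
  simp only [cornerSimplex, Set.ofPred_and, Set.ofPred_forall]
  measurability

theorem convex_cornerSimplex (r : ℝ) : Convex ℝ (cornerSimplex ι r) := by
  simp only [cornerSimplex, Set.ofPred_and, Set.ofPred_forall]
  exact (convex_iInter fun i => convex_halfSpace_ge (LinearMap.proj i).isLinear 0).inter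
    (convex_halfSpace_le (f := fun y : ι → ℝ => ∑ i, y i)
      ⟨fun _ _ => Finset.sum_add_distrib, fun _ _ => (Finset.mul_sum ..).symm⟩ r)

theorem cornerSimplex_eq_empty {r : ℝ} (hr : r < 0) : cornerSimplex ι r = ∅ :=
  Set.eq_empty_of_forall_notMem fun _ hy =>
    (hr.trans_le (Finset.sum_nonneg fun i _ => hy.1 i)).not_ge hy.2

end Corner

theorem volume_cornerSimplex_succ (n : ℕ) (r : ℝ) :
    volume (cornerSimplex (Fin (n + 1)) r) =
      ∫⁻ t in Set.Icc 0 r, volume (cornerSimplex (Fin n) (r - t)) := by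
  set e := MeasurableEquiv.piFinSuccAbove (fun _ : Fin (n + 1) => ℝ) 0
  set T : Set (ℝ × (Fin n → ℝ)) := {p | 0 ≤ p.1 ∧ p.2 ∈ cornerSimplex (Fin n) (r - p.1)}
  have hT : MeasurableSet T := by
    simp only [T, cornerSimplex, Set.mem_ofPred_eq]
    measurability
  have hpre : cornerSimplex (Fin (n + 1)) r = e ⁻¹' T := by
    ext y
    simp only [cornerSimplex, Fin.forall_fin_succ, Fin.sum_univ_succ, Set.mem_ofPred_eq,
      MeasurableEquiv.piFinSuccAbove_apply, Fin.insertNthEquiv_zero, le_sub_iff_add_le',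
      Set.preimage_ofPred_eq, Fin.consEquiv_symm_apply, e, T]
    tauto
  have hslice (t : ℝ) : volume (Prod.mk t ⁻¹' T) =
      (Set.Icc 0 r).indicator (fun t => volume (cornerSimplex (Fin n) (r - t))) t := by
    by_cases ht : t ∈ Set.Icc 0 r
    · simp [T, ht, ht.1]
    · rw [Set.indicator_of_notMem ht]
      rcases not_and_or.mp ht with h | h
      · simp [T, h]
      · simp [T, cornerSimplex_eq_empty (sub_neg.2 (not_le.1 h))]
  rw [hpre, ((volume_preserving_piFinSuccAbove (fun _ => ℝ) 0).measure_preimage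
    hT.nullMeasurableSet), Measure.volume_eq_prod, Measure.prod_apply hT]
  simp_rw [hslice]
  exact lintegral_indicator measurableSet_Icc _

theorem lintegral_Icc_sub_pow_div_factorial (n : ℕ) {r : ℝ} (hr : 0 ≤ r) :
    ∫⁻ t in Set.Icc 0 r, ENNReal.ofReal ((r - t) ^ n / n.factorial) =
      ENNReal.ofReal (r ^ (n + 1) / (n + 1).factorial) := by
  have hint : IntegrableOn (fun t : ℝ => (r - t) ^ n / n.factorial) (Set.Icc 0 r) :=
    (by fun_prop : Continuous fun t : ℝ => (r - t) ^ n / n.factorial).integrableOn_Icc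
  have hnonneg : 0 ≤ᵐ[volume.restrict (Set.Icc 0 r)] fun t : ℝ => (r - t) ^ n / n.factorial := by
    filter_upwards [ae_restrict_mem measurableSet_Icc] with t ht
    have : 0 ≤ r - t := sub_nonneg.2 ht.2
    positivity
  rw [← ofReal_integral_eq_lintegral_ofReal hint hnonneg, integral_Icc_eq_integral_Ioc,
    ← intervalIntegral.integral_of_le hr, intervalIntegral.integral_div,
    intervalIntegral.integral_comp_sub_left (fun u => u ^ n), sub_self, sub_zero, integral_pow,
    Nat.factorial_succ]
  push_cast
  congr 1
  field_simp
  ring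

theorem volume_cornerSimplex (n : ℕ) {r : ℝ} (hr : 0 ≤ r) :
    volume (cornerSimplex (Fin n) r) = ENNReal.ofReal (r ^ n / n.factorial) := by
  induction n generalizing r with
  | zero =>
    have : cornerSimplex (Fin 0) r = Set.univ := by simp [cornerSimplex, hr]
    simp [this, volume_pi]
  | succ n ih =>
    rw [volume_cornerSimplex_succ, ← lintegral_Icc_sub_pow_div_factorial n hr]
    exact setLIntegral_congr_fun measurableSet_Icc fun t ht => ih (sub_nonneg.2 ht.2)

section Euclidean

variable {ι : Type*} [Fintype ι] [DecidableEq ι]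

theorem convexHull_insert_zero_range_single :
    convexHull ℝ (insert 0 (Set.range fun i : ι => EuclideanSpace.single i (1 : ℝ))) =
      WithLp.ofLp ⁻¹' cornerSimplex ι 1 := by
  refine subset_antisymm (convexHull_min ?_ ?_) fun y hy => ?_
  · simp only [Set.insert_subset_iff, Set.range_subset_iff]
    simp [cornerSimplex, PiLp.single_apply, ite_nonneg]
  · exact (convex_cornerSimplex 1).linear_preimage (WithLp.linearEquiv 2 ℝ (ι → ℝ)).toLinearMap
  · refine mem_convexHull_of_exists_fintype (ι := Option ι)
      (fun o => o.elim (1 - ∑ i, y i) y) (fun o => o.elim 0 fun i => EuclideanSpace.single i 1)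
      ?_ (by simp [Fintype.sum_option]) ?_ ?_
    · rintro (_ | i)
      · exact sub_nonneg.2 hy.2
      · exact hy.1 i
    · rintro (_ | i) <;> simp
    · ext k
      simp [Fintype.sum_option, Pi.single_apply]

theorem setOf_le_one_and_neg_sum_le_one_eq_vadd_smul :
    {x : EuclideanSpace ℝ ι | (∀ i, x i ≤ 1) ∧ -∑ i, x i ≤ 1} =
      (∑ j : ι, EuclideanSpace.single j (1 : ℝ)) +ᵥ
        (-((Fintype.card ι : ℝ) + 1)) • (WithLp.ofLp ⁻¹' cornerSimplex ι 1) := by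
  set c : ℝ := -((Fintype.card ι : ℝ) + 1)
  have hc : c < 0 := by linarith [(Fintype.card ι).cast_nonneg' (α := ℝ)]
  ext x
  have hcoord (i : ι) :
      (c⁻¹ • (-(∑ j : ι, EuclideanSpace.single j (1 : ℝ)) +ᵥ x)) i = (x i - 1) / c := by
    simp [Pi.single_apply, div_eq_inv_mul, neg_add_eq_sub]
  rw [Set.mem_vadd_set_iff_neg_vadd_mem, Set.mem_smul_set_iff_inv_smul_mem₀ hc.ne]
  simp only [cornerSimplex, Set.mem_preimage, Set.mem_ofPred_eq, hcoord]
  refine and_congr (forall_congr' fun i => ?_) ?_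
  · rw [le_div_iff_of_neg hc, zero_mul, sub_nonpos]
  · rw [← Finset.sum_div, div_le_iff_of_neg hc, Finset.sum_sub_distrib]
    simp only [Finset.sum_const, Finset.card_univ, nsmul_eq_mul, mul_one, c]
    constructor <;> intro <;> linarith

end Euclidean

theorem volume_preimage_ofLp_cornerSimplex (n : ℕ) {r : ℝ} (hr : 0 ≤ r) :
    volume (WithLp.ofLp ⁻¹' cornerSimplex (Fin n) r : Set (EuclideanSpace ℝ (Fin n))) =
      ENNReal.ofReal (r ^ n / n.factorial) := by
  rw [(PiLp.volume_preserving_ofLp (Fin n)).measure_preimage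
    (measurableSet_cornerSimplex r).nullMeasurableSet, volume_cornerSimplex n hr]

/-- Let `S` be the simplex with vertices `e₁, ..., eₙ` and `-(e₁ + ⋯ + eₙ)`.
Its polar is the simplex with vertices `v₀ = e₁ + ⋯ + eₙ` and
`vⱼ = v₀ - (n+1) eⱼ`, and it has volume `(n+1)^n / n!`. -/
theorem polar_special_simplex {n : ℕ} :
    polarBody (convexHull ℝ (Set.range
        (Fin.snoc (fun i : Fin n => EuclideanSpace.single i (1 : ℝ))
          (-(∑ j : Fin n, EuclideanSpace.single j (1 : ℝ))) :
          Fin (n + 1) → EuclideanSpace ℝ (Fin n))))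
      = convexHull ℝ (Set.range
        (Fin.cons (∑ j : Fin n, EuclideanSpace.single j (1 : ℝ))
          (fun j : Fin n =>
            (∑ i : Fin n, EuclideanSpace.single i (1 : ℝ))
              - ((n : ℝ) + 1) • EuclideanSpace.single j (1 : ℝ)) :
          Fin (n + 1) → EuclideanSpace ℝ (Fin n)))
    ∧ (volume (polarBody (convexHull ℝ (Set.range
        (Fin.snoc (fun i : Fin n => EuclideanSpace.single i (1 : ℝ))
          (-(∑ j : Fin n, EuclideanSpace.single j (1 : ℝ))) :
          Fin (n + 1) → EuclideanSpace ℝ (Fin n)))))).toReal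
      = ((n : ℝ) + 1) ^ n / (n.factorial : ℝ) := by
  rw [polarBody_convexHull, polarBody_range_snoc_single_neg_sum,
    setOf_le_one_and_neg_sum_le_one_eq_vadd_smul, Fintype.card_fin]
  constructor
  · rw [Fin.range_cons, ← convexHull_insert_zero_range_single, ← convexHull_smul,
      ← convexHull_vadd, Set.smul_set_insert, Set.vadd_set_insert, Set.smul_set_range,
      Set.vadd_set_range]
    simp only [vadd_eq_add, smul_zero, add_zero, neg_smul, ← sub_eq_add_neg]
  · rw [measure_vadd, Measure.addHaar_smul, volume_preimage_ofLp_cornerSimplex n zero_le_one,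
      finrank_euclideanSpace_fin, ← ENNReal.ofReal_mul (abs_nonneg _),
      ENNReal.toReal_ofReal (by positivity), abs_pow, abs_neg, abs_of_pos (by positivity)]
    ring
end

section
/- Let K be a convex body in R^n and suppose the Euclidean unit ball B_2^n is the maximal volume ellipsoid contained in a simplex S ⊇ B_2^n. Then S has minimal volume among all simplices containing B_2^n: if T is any simplex with B_2^n ⊆ T, then vol(S) ≤ vol(T). -/
/-!
An affine equivalence `A` carrying `T` onto `S` multiplies every volume by `|det A|`. The ellipsoid
`A(B₂ⁿ)` lies in `A(T) = S`, so maximality of `B₂ⁿ` gives `|det A| ≤ 1`, and then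
`vol S = |det A| · vol T ≤ vol T`.
-/

open MeasureTheory Pointwise

def IsSimplex {n : ℕ} (S : Set (EuclideanSpace ℝ (Fin n))) : Prop :=
  ∃ v : Fin (n + 1) → EuclideanSpace ℝ (Fin n),
    AffineIndependent ℝ v ∧ S = convexHull ℝ (Set.range v)

def IsEllipsoid {n : ℕ} (E : Set (EuclideanSpace ℝ (Fin n))) : Prop :=
  ∃ A : EuclideanSpace ℝ (Fin n) ≃ᵃ[ℝ] EuclideanSpace ℝ (Fin n),
    E = A '' Metric.closedBall 0 1

theorem AffineBasis.exists_affineEquiv_apply {ι k V₁ P₁ V₂ P₂ : Type*} [Ring k]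
    [AddCommGroup V₁] [Module k V₁] [AddTorsor V₁ P₁]
    [AddCommGroup V₂] [Module k V₂] [AddTorsor V₂ P₂]
    (b₁ : AffineBasis ι k P₁) (b₂ : AffineBasis ι k P₂) :
    ∃ A : P₁ ≃ᵃ[k] P₂, ∀ i, A (b₁ i) = b₂ i := by
  obtain ⟨i₀⟩ := b₁.nonempty
  let L : V₁ ≃ₗ[k] V₂ := (b₁.basisOf i₀).equiv (b₂.basisOf i₀) (Equiv.refl _)
  refine ⟨((AffineEquiv.vaddConst k (b₁ i₀)).symm.trans L.toAffineEquiv).trans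
    (AffineEquiv.vaddConst k (b₂ i₀)), fun i => ?_⟩
  by_cases hi : i = i₀
  · subst hi
    simp
  · have hL : L (b₁ i -ᵥ b₁ i₀) = b₂ i -ᵥ b₂ i₀ := by
      simpa [L, AffineBasis.basisOf_apply] using
        (b₁.basisOf i₀).equiv_apply ⟨i, hi⟩ (b₂.basisOf i₀) (Equiv.refl _)
    simp [hL]

section AddHaar

variable {E : Type*} [NormedAddCommGroup E] [NormedSpace ℝ E] [MeasurableSpace E] [BorelSpace E]
  [FiniteDimensional ℝ E] (μ : Measure E) [μ.IsAddHaarMeasure] (A : E ≃ᵃ[ℝ] E)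

theorem AffineEquiv.addHaar_image (s : Set E) :
    μ (A '' s) = ENNReal.ofReal |LinearMap.det (A.linear : E →ₗ[ℝ] E)| * μ s := by
  have hA : A '' s = A 0 +ᵥ (A.linear : E →ₗ[ℝ] E) '' s := by
    rw [← Set.image_vadd, Set.image_image]
    refine Set.image_congr fun x _ => ?_
    rw [vadd_eq_add, add_comm, ← A.linear_toAffineMap]
    exact congrFun A.toAffineMap.decomp x
  rw [hA, measure_vadd, Measure.addHaar_image_linearMap]

theorem AffineEquiv.addHaar_image_le_of_addHaar_image_le {K : Set E} (hK₀ : μ K ≠ 0)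
    (hK : μ K ≠ ⊤) (hAK : μ (A '' K) ≤ μ K) (s : Set E) : μ (A '' s) ≤ μ s := by
  rw [A.addHaar_image μ] at hAK ⊢
  have hdet : ENNReal.ofReal |LinearMap.det (A.linear : E →ₗ[ℝ] E)| ≤ 1 := by
    rwa [← ENNReal.mul_le_mul_iff_left hK₀ hK, one_mul]
  simpa using mul_le_mul_left hdet (μ s)

end AddHaar

theorem IsSimplex.exists_affineEquiv_image_eq {n : ℕ} {S T : Set (EuclideanSpace ℝ (Fin n))}
    (hS : IsSimplex S) (hT : IsSimplex T) :
    ∃ A : EuclideanSpace ℝ (Fin n) ≃ᵃ[ℝ] EuclideanSpace ℝ (Fin n), A '' S = T := by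
  have spans {v : Fin (n + 1) → EuclideanSpace ℝ (Fin n)} (hv : AffineIndependent ℝ v) :
      affineSpan ℝ (Set.range v) = ⊤ :=
    hv.affineSpan_eq_top_iff_card_eq_finrank_add_one.mpr (by simp)
  obtain ⟨v, hv, rfl⟩ := hS
  obtain ⟨w, hw, rfl⟩ := hT
  obtain ⟨A, hA⟩ := AffineBasis.exists_affineEquiv_apply ⟨v, hv, spans hv⟩ ⟨w, hw, spans hw⟩
  refine ⟨A, ?_⟩
  rw [← A.coe_toAffineMap, AffineMap.image_convexHull, ← Set.range_comp]
  exact congrArg _ (congrArg Set.range (funext hA))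

theorem john_position_simplex_minimal_general {n : ℕ} (S : Set (EuclideanSpace ℝ (Fin n)))
    (hS : IsSimplex S)
    (hmax : ∀ E : Set (EuclideanSpace ℝ (Fin n)), IsEllipsoid E → E ⊆ S →
      volume E ≤ volume (Metric.closedBall (0 : EuclideanSpace ℝ (Fin n)) 1)) :
    ∀ T : Set (EuclideanSpace ℝ (Fin n)), IsSimplex T →
      Metric.closedBall (0 : EuclideanSpace ℝ (Fin n)) 1 ⊆ T →
      volume S ≤ volume T := by
  intro T hT hBT
  obtain ⟨A, rfl⟩ := hT.exists_affineEquiv_image_eq hS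
  refine A.addHaar_image_le_of_addHaar_image_le volume
    (Metric.measure_closedBall_pos volume 0 one_pos).ne' measure_closedBall_lt_top.ne ?_ T
  exact hmax _ ⟨A, rfl⟩ (Set.image_mono hBT)

/-- If the Euclidean unit ball is the maximal volume ellipsoid contained in a simplex
`S ⊇ B₂ⁿ`, then `S` has minimal volume among all simplices containing `B₂ⁿ`. -/
theorem john_position_simplex_minimal {n : ℕ} (S : Set (EuclideanSpace ℝ (Fin n)))
    (hS : IsSimplex S) (hBS : Metric.closedBall (0 : EuclideanSpace ℝ (Fin n)) 1 ⊆ S)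
    (hmax : ∀ E : Set (EuclideanSpace ℝ (Fin n)), IsEllipsoid E → E ⊆ S →
      volume E ≤ volume (Metric.closedBall (0 : EuclideanSpace ℝ (Fin n)) 1)) :
    ∀ T : Set (EuclideanSpace ℝ (Fin n)), IsSimplex T →
      Metric.closedBall (0 : EuclideanSpace ℝ (Fin n)) 1 ⊆ T →
      volume S ≤ volume T :=
  john_position_simplex_minimal_general S hS hmax
end

section
/- Let μ be the uniform probability measure on a convex body K ⊂ R^n of volume 1, let |·| be a seminorm on R^n, and let p ≥ 1. Then (∫_K |x|^p dx)^{1/p} ≤ C p ∫_K |x| dx for an absolute constant C ≥ 1. -/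
/-!
The uniform measure on a convex body satisfies the Prékopa–Leindler inequality. On the line this
follows from the Brunn–Minkowski inequality `|S| + |T| ≤ |S + T|`, applied to superlevel sets and
integrated by the layer-cake formula; Fubini carries it to `ℝⁿ`, and multiplying by the indicator
of a convex set restricts it to that set.

Applied to the indicators of the set where the seminorm exceeds `s * t` and of the `t`-ball, with
weight `l = 2 / (s + 1)`, it gives Borell's lemma: every such combination lies outside the
`t`-ball, so once the `t`-ball has mass at least `2 / 3` (Markov's inequality with
`t = 3 ∫ |x|`), the mass beyond `s * t` is at most `2 ^ (-(s + 1) / 2)`. Integrating this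
exponential tail bounds the `p`-th moment by `(36 p ∫ |x|) ^ p`.
-/

open MeasureTheory Set ENNReal Pointwise
open scoped NNReal

/-! ### Brunn–Minkowski on the line -/

theorem IsCompact.volume_add_volume_le_volume_add {S T : Set ℝ} (hS : IsCompact S)
    (hT : IsCompact T) (hS₀ : S.Nonempty) (hT₀ : T.Nonempty) :
    volume S + volume T ≤ volume (S + T) := by
  set a := sSup S
  set b := sInf T
  have ha : a ∈ S := hS.sSup_mem hS₀
  have hb : b ∈ T := hT.sInf_mem hT₀
  have hmeet : (S + {b}) ∩ ({a} + T) ⊆ {a + b} := by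
    rintro _ ⟨⟨x, hx, _, rfl, rfl⟩, ⟨_, rfl, y, hy, hxy⟩⟩
    have := le_csSup hS.bddAbove hx
    have := csInf_le hT.bddBelow hy
    simp only [mem_singleton_iff]
    linarith
  calc volume S + volume T = volume (S + {b}) + volume ({a} + T) := by
        rw [add_singleton, singleton_add, image_add_right, image_add_left,
          measure_preimage_add_right, measure_preimage_add]
    _ = volume ((S + {b}) ∪ ({a} + T)) := by
        rw [← measure_union_add_inter _ (isCompact_singleton.add hT).measurableSet,
          measure_mono_null hmeet (measure_singleton _), add_zero]
    _ ≤ volume (S + T) := measure_mono (union_subset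
        (add_subset_add_left (singleton_subset_iff.2 hb))
        (add_subset_add_right (singleton_subset_iff.2 ha)))

theorem Real.volume_add_volume_le_volume_add {S T : Set ℝ} (hS : MeasurableSet S)
    (hT : MeasurableSet T) (hS₀ : S.Nonempty) (hT₀ : T.Nonempty) :
    volume S + volume T ≤ volume (S + T) := by
  obtain ⟨x, hx⟩ := hS₀
  obtain ⟨y, hy⟩ := hT₀
  have hcompact : ∀ K₁ ⊆ S, IsCompact K₁ → ∀ K₂ ⊆ T, IsCompact K₂ →
      volume K₁ + volume K₂ ≤ volume (S + T) := fun K₁ hK₁S hK₁ K₂ hK₂T hK₂ => calc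
    volume K₁ + volume K₂ ≤ volume (insert x K₁) + volume (insert y K₂) := by
      gcongr <;> exact subset_insert _ _
    _ ≤ volume (insert x K₁ + insert y K₂) :=
      (hK₁.insert x).volume_add_volume_le_volume_add (hK₂.insert y) (insert_nonempty _ _)
        (insert_nonempty _ _)
    _ ≤ volume (S + T) :=
      measure_mono (add_subset_add (insert_subset hx hK₁S) (insert_subset hy hK₂T))
  rw [hS.measure_eq_iSup_isCompact, hT.measure_eq_iSup_isCompact]
  simp only [iSup_and', iSup_subtype']
  have : Nonempty {K // K ⊆ S ∧ IsCompact K} := ⟨⟨∅, empty_subset _, isCompact_empty⟩⟩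
  have : Nonempty {K // K ⊆ T ∧ IsCompact K} := ⟨⟨∅, empty_subset _, isCompact_empty⟩⟩
  exact ENNReal.iSup_add_iSup_le fun K₁ K₂ => hcompact _ K₁.2.1 K₁.2.2 _ K₂.2.1 K₂.2.2

theorem Real.ofReal_mul_volume_add_ofReal_mul_volume_le {S T U : Set ℝ} (hS : MeasurableSet S)
    (hT : MeasurableSet T) (hS₀ : S.Nonempty) (hT₀ : T.Nonempty) {l : ℝ} (hl0 : 0 < l)
    (hl1 : l < 1) (hU : ∀ x ∈ S, ∀ y ∈ T, l * x + (1 - l) * y ∈ U) :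
    ENNReal.ofReal l * volume S + ENNReal.ofReal (1 - l) * volume T ≤ volume U := by
  calc ENNReal.ofReal l * volume S + ENNReal.ofReal (1 - l) * volume T
      = volume (l • S) + volume ((1 - l) • T) := by
        rw [Measure.addHaar_smul, Measure.addHaar_smul, Module.finrank_self, pow_one, pow_one,
          abs_of_pos hl0, abs_of_pos (sub_pos.2 hl1)]
    _ ≤ volume (l • S + (1 - l) • T) :=
        Real.volume_add_volume_le_volume_add (hS.const_smul₀ _) (hT.const_smul₀ _)
          hS₀.smul_set hT₀.smul_set
    _ ≤ volume U := by
        refine measure_mono ?_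
        rintro _ ⟨_, ⟨x, hx, rfl⟩, _, ⟨y, hy, rfl⟩, rfl⟩
        exact hU x hx y hy

/-! ### The Prékopa–Leindler inequality -/

theorem lintegral_ofReal_eq_mul_lintegral_meas_lt {α : Type*} [MeasurableSpace α]
    (μ : Measure α) {f : α → ℝ} (hf0 : 0 ≤ᵐ[μ] f) (hf : AEMeasurable f μ) {a : ℝ} (ha : 0 < a) :
    ∫⁻ x, ENNReal.ofReal (f x) ∂μ = ENNReal.ofReal a * ∫⁻ t in Ioi 0, μ {x | a * t < f x} := by
  have hscaled := lintegral_eq_lintegral_meas_lt μ (f := fun x => f x / a)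
    (hf0.mono fun x hx => div_nonneg hx ha.le) (hf.div_const a)
  simp only [lt_div_iff₀' ha] at hscaled
  rw [← hscaled, ← lintegral_const_mul' _ _ ofReal_ne_top]
  refine lintegral_congr fun x => ?_
  rw [← ENNReal.ofReal_mul ha.le, mul_div_cancel₀ _ ha.ne']

theorem ENNReal.geom_mean_le_arith_mean2_weighted {l : ℝ} (hl0 : 0 < l) (hl1 : l < 1)
    (x y : ℝ≥0∞) : x ^ l * y ^ (1 - l) ≤ ENNReal.ofReal l * x + ENNReal.ofReal (1 - l) * y := by
  have hl1' : 0 < 1 - l := sub_pos.2 hl1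
  rcases eq_or_ne x ⊤ with rfl | hx
  · simp [hl0]
  rcases eq_or_ne y ⊤ with rfl | hy
  · simp [(ofReal_pos.2 hl1').ne']
  lift x to ℝ≥0 using hx
  lift y to ℝ≥0 using hy
  have hw : l.toNNReal + (1 - l).toNNReal = 1 := by
    rw [← Real.toNNReal_add hl0.le hl1'.le, add_sub_cancel, Real.toNNReal_one]
  have hxy := NNReal.geom_mean_le_arith_mean2_weighted _ _ x y hw
  rw [Real.coe_toNNReal _ hl0.le, Real.coe_toNNReal _ hl1'.le] at hxy
  rw [← coe_rpow_of_nonneg _ hl0.le, ← coe_rpow_of_nonneg _ hl1'.le, ENNReal.ofReal,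
    ENNReal.ofReal]
  exact_mod_cast hxy

section OneDimensional

variable {f g h : ℝ → ℝ} {a b l : ℝ}

/-- Normalising by the suprema `a`, `b` makes the superlevel sets at heights `a * t`, `b * t`
nonempty for every `t < 1`, which is what the Brunn–Minkowski inequality needs. -/
theorem Real.ofReal_mul_volume_lt_add_le_volume_lt (hf : Measurable f) (hg : Measurable g)
    (ha : 0 < a) (hb : 0 < b) (hfa : IsLUB (range f) a) (hgb : IsLUB (range g) b) (hl0 : 0 < l)
    (hl1 : l < 1) (hfgh : ∀ x y, f x ^ l * g y ^ (1 - l) ≤ h (l * x + (1 - l) * y))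
    {t : ℝ} (ht : 0 < t) :
    ENNReal.ofReal l * volume {x | a * t < f x} + ENNReal.ofReal (1 - l) * volume {x | b * t < g x}
      ≤ volume {x | a ^ l * b ^ (1 - l) * t < h x} := by
  rcases lt_or_ge t 1 with ht1 | ht1
  · obtain ⟨_, ⟨x, rfl⟩, hx, -⟩ := hfa.exists_between (mul_lt_of_lt_one_right ha ht1)
    obtain ⟨_, ⟨y, rfl⟩, hy, -⟩ := hgb.exists_between (mul_lt_of_lt_one_right hb ht1)
    refine Real.ofReal_mul_volume_add_ofReal_mul_volume_le
      (measurableSet_lt measurable_const hf) (measurableSet_lt measurable_const hg)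
      ⟨x, hx⟩ ⟨y, hy⟩ hl0 hl1 fun x (hx : a * t < f x) y (hy : b * t < g y) => ?_
    calc a ^ l * b ^ (1 - l) * t = (a * t) ^ l * (b * t) ^ (1 - l) := by
          rw [Real.mul_rpow ha.le ht.le, Real.mul_rpow hb.le ht.le, mul_mul_mul_comm,
            ← Real.rpow_add ht, add_sub_cancel, Real.rpow_one]
      _ < f x ^ l * g y ^ (1 - l) := by gcongr
      _ ≤ h (l * x + (1 - l) * y) := hfgh x y
  · have hempty : ∀ {u : ℝ → ℝ} {d : ℝ}, IsLUB (range u) d → 0 < d → {x | d * t < u x} = ∅ :=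
      fun hud hd => eq_empty_of_forall_notMem fun x (hx : _ < _) =>
        (hud.1 (mem_range_self x)).not_gt ((le_mul_of_one_le_right hd.le ht1).trans_lt hx)
    simp [hempty hfa ha, hempty hgb hb]

theorem Real.prekopaLeindler_of_isLUB (hf0 : 0 ≤ f) (hg0 : 0 ≤ g) (hh0 : 0 ≤ h)
    (hf : Measurable f) (hg : Measurable g) (hh : Measurable h) (ha : 0 < a) (hb : 0 < b)
    (hfa : IsLUB (range f) a) (hgb : IsLUB (range g) b) (hl0 : 0 < l) (hl1 : l < 1)
    (hfgh : ∀ x y, f x ^ l * g y ^ (1 - l) ≤ h (l * x + (1 - l) * y)) :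
    (∫⁻ x, ENNReal.ofReal (f x)) ^ l * (∫⁻ x, ENNReal.ofReal (g x)) ^ (1 - l) ≤
      ∫⁻ x, ENNReal.ofReal (h x) := by
  set c := a ^ l * b ^ (1 - l)
  have hmeas : Measurable fun t => volume {x | a * t < f x} :=
    Antitone.measurable fun s t hst => measure_mono fun x (hx : _ < _) =>
      (mul_le_mul_of_nonneg_left hst ha.le).trans_lt hx
  rw [lintegral_ofReal_eq_mul_lintegral_meas_lt volume (.of_forall hf0) hf.aemeasurable ha,
    lintegral_ofReal_eq_mul_lintegral_meas_lt volume (.of_forall hg0) hg.aemeasurable hb,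
    lintegral_ofReal_eq_mul_lintegral_meas_lt volume (.of_forall hh0) hh.aemeasurable
      (by positivity : 0 < c)]
  set I := ∫⁻ t in Ioi 0, volume {x | a * t < f x}
  set J := ∫⁻ t in Ioi 0, volume {x | b * t < g x}
  have hlevel : ENNReal.ofReal l * I + ENNReal.ofReal (1 - l) * J ≤
      ∫⁻ t in Ioi 0, volume {x | c * t < h x} := by
    rw [← lintegral_const_mul' _ _ ofReal_ne_top, ← lintegral_const_mul' _ _ ofReal_ne_top,
      ← lintegral_add_left (hmeas.const_mul _)]
    exact setLIntegral_mono' measurableSet_Ioi fun t ht =>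
      Real.ofReal_mul_volume_lt_add_le_volume_lt hf hg ha hb hfa hgb hl0 hl1 hfgh ht
  calc (ENNReal.ofReal a * I) ^ l * (ENNReal.ofReal b * J) ^ (1 - l)
      = ENNReal.ofReal c * (I ^ l * J ^ (1 - l)) := by
        rw [mul_rpow_of_nonneg _ _ hl0.le, mul_rpow_of_nonneg _ _ (sub_pos.2 hl1).le,
          ENNReal.ofReal_mul (by positivity), ofReal_rpow_of_pos ha, ofReal_rpow_of_pos hb]
        ring
    _ ≤ ENNReal.ofReal c * ∫⁻ t in Ioi 0, volume {x | c * t < h x} := by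
        gcongr
        exact (ENNReal.geom_mean_le_arith_mean2_weighted hl0 hl1 I J).trans hlevel

theorem Real.prekopaLeindler_of_bddAbove (hf0 : 0 ≤ f) (hg0 : 0 ≤ g) (hh0 : 0 ≤ h)
    (hf : Measurable f) (hg : Measurable g) (hh : Measurable h) (hfb : BddAbove (range f))
    (hgb : BddAbove (range g)) (hl0 : 0 < l) (hl1 : l < 1)
    (hfgh : ∀ x y, f x ^ l * g y ^ (1 - l) ≤ h (l * x + (1 - l) * y)) :
    (∫⁻ x, ENNReal.ofReal (f x)) ^ l * (∫⁻ x, ENNReal.ofReal (g x)) ^ (1 - l) ≤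
      ∫⁻ x, ENNReal.ofReal (h x) := by
  rcases le_or_gt (⨆ x, f x) 0 with ha | ha
  · have hf_zero : ∀ x, f x = 0 := fun x => le_antisymm ((le_ciSup hfb x).trans ha) (hf0 x)
    simp [hf_zero, hl0]
  rcases le_or_gt (⨆ x, g x) 0 with hb | hb
  · have hg_zero : ∀ x, g x = 0 := fun x => le_antisymm ((le_ciSup hgb x).trans hb) (hg0 x)
    simp [hg_zero, sub_pos.2 hl1]
  exact Real.prekopaLeindler_of_isLUB hf0 hg0 hh0 hf hg hh ha hb (isLUB_ciSup hfb)
    (isLUB_ciSup hgb) hl0 hl1 hfgh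

end OneDimensional

theorem ENNReal.iSup_rpow_mul_iSup_rpow_le {u v : ℕ → ℝ≥0∞} (hu : Monotone u) (hv : Monotone v)
    {p q : ℝ} (hp : 0 < p) (hq : 0 < q) {c : ℝ≥0∞} (h : ∀ n, u n ^ p * v n ^ q ≤ c) :
    (⨆ n, u n) ^ p * (⨆ n, v n) ^ q ≤ c := by
  have hrpow := fun {r : ℝ} (hr : 0 < r) (w : ℕ → ℝ≥0∞) => (orderIsoRpow r hr).map_iSup w
  simp only [orderIsoRpow_apply] at hrpow
  rw [hrpow hp, hrpow hq, ENNReal.iSup_mul]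
  refine iSup_le fun m => ?_
  rw [ENNReal.mul_iSup]
  refine iSup_le fun n => le_trans ?_ (h (max m n))
  gcongr
  exacts [hu (le_max_left m n), hv (le_max_right m n)]

theorem lintegral_eq_iSup_lintegral_min_natCast {α : Type*} [MeasurableSpace α] {μ : Measure α}
    {f : α → ℝ≥0∞} (hf : Measurable f) :
    ∫⁻ x, f x ∂μ = ⨆ n : ℕ, ∫⁻ x, min (f x) n ∂μ := by
  rw [← lintegral_iSup (fun n => hf.min measurable_const)
    fun _ _ hmn _ => min_le_min_left _ (Nat.cast_le.2 hmn)]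
  congr with x
  rw [← inf_iSup_eq, iSup_natCast, inf_top_eq]

/-- Log-concavity of `μ`, in the functional form of the Prékopa–Leindler inequality. -/
def SatisfiesPrekopaLeindler {E : Type*} [AddCommGroup E] [Module ℝ E] [MeasurableSpace E]
    (μ : Measure E) : Prop :=
  ∀ ⦃f g h : E → ℝ≥0∞⦄, Measurable f → Measurable g → Measurable h → ∀ ⦃l : ℝ⦄, 0 < l → l < 1 →
    (∀ x y, f x ^ l * g y ^ (1 - l) ≤ h (l • x + (1 - l) • y)) →
    (∫⁻ x, f x ∂μ) ^ l * (∫⁻ x, g x ∂μ) ^ (1 - l) ≤ ∫⁻ x, h x ∂μ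

theorem Real.prekopaLeindler_min_natCast {f g h : ℝ → ℝ≥0∞} (hf : Measurable f)
    (hg : Measurable g) (hh : Measurable h) {l : ℝ} (hl0 : 0 < l) (hl1 : l < 1)
    (hfgh : ∀ x y, f x ^ l * g y ^ (1 - l) ≤ h (l * x + (1 - l) * y)) (n : ℕ) :
    (∫⁻ x, min (f x) n) ^ l * (∫⁻ x, min (g x) n) ^ (1 - l) ≤ ∫⁻ x, h x := by
  have hne_top : ∀ (u : ℝ → ℝ≥0∞) x, min (u x) n ≠ ∞ :=
    fun u x => ne_top_of_le_ne_top (natCast_ne_top n) (min_le_right _ _)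
  have hbdd : ∀ u : ℝ → ℝ≥0∞, BddAbove (range fun x => (min (u x) n).toReal) := fun u =>
    ⟨n, forall_mem_range.2 fun x => toReal_le_of_le_ofReal n.cast_nonneg
      ((min_le_right _ _).trans_eq (ofReal_natCast n).symm)⟩
  have htrunc : ∀ x y, min (f x) n ^ l * min (g y) n ^ (1 - l) ≤ min (h (l * x + (1 - l) * y)) n :=
    fun x y => le_min
      (calc _ ≤ f x ^ l * g y ^ (1 - l) := by gcongr <;> exact min_le_left _ _
        _ ≤ h (l * x + (1 - l) * y) := hfgh x y)
      (calc _ ≤ (n : ℝ≥0∞) ^ l * (n : ℝ≥0∞) ^ (1 - l) := by gcongr <;> exact min_le_right _ _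
        _ = n := by
          rw [← ENNReal.rpow_add_of_nonneg _ _ hl0.le (sub_pos.2 hl1).le, add_sub_cancel,
            ENNReal.rpow_one])
  have key := Real.prekopaLeindler_of_bddAbove (h := fun x => (min (h x) n).toReal)
    (fun _ => toReal_nonneg) (fun _ => toReal_nonneg) (fun _ => toReal_nonneg)
    (hf.min measurable_const).ennreal_toReal (hg.min measurable_const).ennreal_toReal
    (hh.min measurable_const).ennreal_toReal (hbdd f) (hbdd g) hl0 hl1 fun x y => by
      rw [toReal_rpow, toReal_rpow, ← toReal_mul]
      exact toReal_mono (hne_top h _) (htrunc x y)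
  simp only [ofReal_toReal (hne_top _ _)] at key
  exact key.trans (lintegral_mono fun x => min_le_left _ _)

theorem Real.satisfiesPrekopaLeindler_volume : SatisfiesPrekopaLeindler (volume : Measure ℝ) := by
  intro f g h hf hg hh l hl0 hl1 hfgh
  have hmono : ∀ u : ℝ → ℝ≥0∞, Monotone fun n : ℕ => ∫⁻ x, min (u x) n :=
    fun u _ _ hmn => lintegral_mono fun _ => min_le_min_left _ (Nat.cast_le.2 hmn)
  rw [lintegral_eq_iSup_lintegral_min_natCast hf, lintegral_eq_iSup_lintegral_min_natCast hg]
  exact ENNReal.iSup_rpow_mul_iSup_rpow_le (hmono f) (hmono g) hl0 (sub_pos.2 hl1)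
    (Real.prekopaLeindler_min_natCast hf hg hh hl0 hl1 hfgh)

namespace SatisfiesPrekopaLeindler

variable {E F : Type*} [AddCommGroup E] [Module ℝ E] [MeasurableSpace E]
  [AddCommGroup F] [Module ℝ F] [MeasurableSpace F] {μ : Measure E}

theorem dirac (x : E) : SatisfiesPrekopaLeindler (Measure.dirac x) := by
  intro f g h hf hg hh l _ _ hfgh
  rw [lintegral_dirac' x hf, lintegral_dirac' x hg, lintegral_dirac' x hh]
  simpa only [Convex.combo_self (add_sub_cancel l 1)] using hfgh x x

theorem prod {ν : Measure F} [SFinite ν] (hμ : SatisfiesPrekopaLeindler μ)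
    (hν : SatisfiesPrekopaLeindler ν) : SatisfiesPrekopaLeindler (μ.prod ν) := by
  intro f g h hf hg hh l hl0 hl1 hfgh
  rw [lintegral_prod _ hf.aemeasurable, lintegral_prod _ hg.aemeasurable,
    lintegral_prod _ hh.aemeasurable]
  exact hμ hf.lintegral_prod_right' hg.lintegral_prod_right' hh.lintegral_prod_right' hl0 hl1
    fun x x' => hν (hf.comp measurable_prodMk_left) (hg.comp measurable_prodMk_left)
      (hh.comp measurable_prodMk_left) hl0 hl1 fun y y' => hfgh (x, y) (x', y')

theorem of_measurePreserving {ν : Measure F} (hμ : SatisfiesPrekopaLeindler μ) (e : E →ₗ[ℝ] F)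
    (he : MeasurePreserving e μ ν) : SatisfiesPrekopaLeindler ν := by
  intro f g h hf hg hh l hl0 hl1 hfgh
  rw [← he.lintegral_comp hf, ← he.lintegral_comp hg, ← he.lintegral_comp hh]
  refine hμ (hf.comp he.measurable) (hg.comp he.measurable) (hh.comp he.measurable) hl0 hl1
    fun x y => ?_
  simpa only [Function.comp_apply, map_add, map_smul] using hfgh (e x) (e y)

theorem restrict (hμ : SatisfiesPrekopaLeindler μ) {K : Set E} (hK : Convex ℝ K)
    (hKm : MeasurableSet K) : SatisfiesPrekopaLeindler (μ.restrict K) := by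
  intro f g h hf hg hh l hl0 hl1 hfgh
  simp only [← lintegral_indicator hKm]
  refine hμ (hf.indicator hKm) (hg.indicator hKm) (hh.indicator hKm) hl0 hl1 fun x y => ?_
  by_cases hx : x ∈ K
  · by_cases hy : y ∈ K
    · simpa [hx, hy, hK hx hy hl0.le (sub_pos.2 hl1).le (add_sub_cancel l 1)] using hfgh x y
    · simp [hy, sub_pos.2 hl1]
  · simp [hx, hl0]

theorem measure_rpow_mul_measure_rpow_le (hμ : SatisfiesPrekopaLeindler μ) {S T U : Set E}
    (hS : MeasurableSet S) (hT : MeasurableSet T) (hU : MeasurableSet U) {l : ℝ} (hl0 : 0 < l)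
    (hl1 : l < 1) (hSTU : ∀ x ∈ S, ∀ y ∈ T, l • x + (1 - l) • y ∈ U) :
    μ S ^ l * μ T ^ (1 - l) ≤ μ U := by
  have hind : ∀ x y, S.indicator 1 x ^ l * T.indicator 1 y ^ (1 - l) ≤
      U.indicator (1 : E → ℝ≥0∞) (l • x + (1 - l) • y) := fun x y => by
    by_cases hx : x ∈ S
    · by_cases hy : y ∈ T
      · simp [hx, hy, hSTU x hx y hy]
      · simp [hy, sub_pos.2 hl1]
    · simp [hx, hl0]
  simpa only [lintegral_indicator_one hS, lintegral_indicator_one hT,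
    lintegral_indicator_one hU] using hμ (measurable_one.indicator hS)
      (measurable_one.indicator hT) (measurable_one.indicator hU) hl0 hl1 hind

end SatisfiesPrekopaLeindler

theorem satisfiesPrekopaLeindler_volume_pi (n : ℕ) :
    SatisfiesPrekopaLeindler (volume : Measure (Fin n → ℝ)) := by
  induction n with
  | zero =>
    rw [Measure.volume_pi_eq_dirac 0]
    exact .dirac 0
  | succ n ih =>
    refine (Real.satisfiesPrekopaLeindler_volume.prod ih).of_measurePreserving
      (Fin.consLinearEquiv ℝ fun _ => ℝ).toLinearMap ?_
    convert (volume_preserving_piFinSuccAbove (fun _ : Fin (n + 1) => ℝ) 0).symm using 1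
    · rfl
    · funext p
      simp only [LinearEquiv.coe_coe, MeasurableEquiv.piFinSuccAbove_symm_apply,
        Fin.insertNthEquiv_zero]
      rfl
    · rfl

theorem EuclideanSpace.satisfiesPrekopaLeindler_volume (n : ℕ) :
    SatisfiesPrekopaLeindler (volume : Measure (EuclideanSpace ℝ (Fin n))) :=
  (satisfiesPrekopaLeindler_volume_pi n).of_measurePreserving
    (WithLp.linearEquiv 2 ℝ (Fin n → ℝ)).symm.toLinearMap (PiLp.volume_preserving_toLp (Fin n))

/-! ### Borell's lemma and moments of seminorms -/

open Real in
theorem Real.rpow_mul_exp_neg_mul_le {t p β : ℝ} (ht : 0 ≤ t) (hp : 1 ≤ p) (hβ : 0 < β) :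
    t ^ (p - 1) * exp (-β * t) ≤ (2 * p / β) ^ (p - 1) * exp (-(β / 2) * t) := by
  have hp0 : 0 < p := by linarith
  have hlin : t ≤ 2 * p / β * exp (β * t / (2 * p)) := calc
    t = 2 * p / β * (β * t / (2 * p)) := by field_simp
    _ ≤ 2 * p / β * exp (β * t / (2 * p)) := by
      gcongr
      linarith [add_one_le_exp (β * t / (2 * p))]
  have hpow : t ^ (p - 1) ≤ (2 * p / β) ^ (p - 1) * exp (β * t / 2) := calc
    t ^ (p - 1) ≤ (2 * p / β * exp (β * t / (2 * p))) ^ (p - 1) := by gcongr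
    _ = (2 * p / β) ^ (p - 1) * exp (β * t / (2 * p) * (p - 1)) := by
      rw [Real.mul_rpow (by positivity) (exp_pos _).le, ← exp_mul]
    _ ≤ (2 * p / β) ^ (p - 1) * exp (β * t / 2) := by
      gcongr
      rw [div_mul_eq_mul_div, div_le_div_iff₀ (by positivity) two_pos]
      nlinarith [mul_nonneg hβ.le ht]
  calc t ^ (p - 1) * exp (-β * t) ≤ (2 * p / β) ^ (p - 1) * exp (β * t / 2) * exp (-β * t) := by
        gcongr
    _ = (2 * p / β) ^ (p - 1) * exp (-(β / 2) * t) := by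
        rw [mul_assoc, ← exp_add]
        ring_nf

open Real in
theorem lintegral_rpow_le_of_meas_lt_le_two_mul_exp {α : Type*} [MeasurableSpace α]
    {μ : Measure α} {f : α → ℝ} (hf0 : 0 ≤ᵐ[μ] f) (hf : AEMeasurable f μ) {β p : ℝ} (hβ : 0 < β)
    (hp : 1 ≤ p) (htail : ∀ t > 0, μ {x | t < f x} ≤ ENNReal.ofReal (2 * exp (-β * t))) :
    ∫⁻ x, ENNReal.ofReal (f x ^ p) ∂μ ≤ ENNReal.ofReal (2 * (2 * p / β) ^ p) := by
  have hp0 : 0 < p := by linarith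
  set C := 2 * (2 * p / β) ^ (p - 1)
  have hexp : ∫⁻ t in Ioi 0, ENNReal.ofReal (C * exp (-(β / 2) * t)) =
      ENNReal.ofReal (C * (2 / β)) := by
    rw [← ofReal_integral_eq_lintegral_ofReal
      ((exp_neg_integrableOn_Ioi 0 (by positivity)).const_mul C)
      (ae_of_all _ fun t => by positivity), integral_const_mul,
      integral_exp_mul_Ioi (by linarith) 0]
    congr 1
    field_simp
    simp
  rw [lintegral_rpow_eq_lintegral_meas_lt_mul μ hf0 hf hp0]
  calc ENNReal.ofReal p * ∫⁻ t in Ioi 0, μ {x | t < f x} * ENNReal.ofReal (t ^ (p - 1))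
      ≤ ENNReal.ofReal p * ∫⁻ t in Ioi 0, ENNReal.ofReal (C * exp (-(β / 2) * t)) := by
        refine mul_le_mul_right (setLIntegral_mono' measurableSet_Ioi fun t (ht : 0 < t) => ?_) _
        calc μ {x | t < f x} * ENNReal.ofReal (t ^ (p - 1))
            ≤ ENNReal.ofReal (2 * exp (-β * t)) * ENNReal.ofReal (t ^ (p - 1)) := by
              gcongr
              exact htail t ht
          _ = ENNReal.ofReal (2 * (t ^ (p - 1) * exp (-β * t))) := by
              rw [← ofReal_mul (by positivity)]
              ring_nf
          _ ≤ ENNReal.ofReal (C * exp (-(β / 2) * t)) := by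
              apply ENNReal.ofReal_le_ofReal
              simpa only [C, mul_assoc] using
                mul_le_mul_of_nonneg_left (Real.rpow_mul_exp_neg_mul_le ht.le hp hβ) two_pos.le
    _ = ENNReal.ofReal (2 * (2 * p / β) ^ p) := by
        rw [hexp, ← ofReal_mul hp0.le]
        simp only [C]
        rw [Real.rpow_sub_one (by positivity : 2 * p / β ≠ 0)]
        congr 1
        field_simp

namespace SatisfiesPrekopaLeindler

variable {E : Type*} [AddCommGroup E] [Module ℝ E] [MeasurableSpace E] {μ : Measure E}

theorem measure_lt_seminorm_rpow_mul_le (hμ : SatisfiesPrekopaLeindler μ) (N : Seminorm ℝ E)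
    (hN : Measurable N) (t : ℝ) {s : ℝ} (hs : 1 < s) :
    μ {x | s * t < N x} ^ (2 / (s + 1)) * μ {x | N x ≤ t} ^ (1 - 2 / (s + 1)) ≤
      μ {x | t < N x} := by
  have hl0 : 0 < 2 / (s + 1) := by positivity
  have hl1 : 2 / (s + 1) < 1 := by rw [div_lt_one (by positivity)]; linarith
  refine hμ.measure_rpow_mul_measure_rpow_le (measurableSet_lt measurable_const hN)
    (measurableSet_le hN measurable_const) (measurableSet_lt measurable_const hN) hl0 hl1
    fun x (hx : s * t < N x) y (hy : N y ≤ t) => ?_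
  set l := 2 / (s + 1)
  have hcombo : l * (s * t) - (1 - l) * t = t := by
    simp only [l]
    field_simp
    ring
  have htriangle : N (l • x) ≤ N (l • x + (1 - l) • y) + N ((1 - l) • y) := by
    simpa using map_sub_le_add N (l • x + (1 - l) • y) ((1 - l) • y)
  rw [map_smul_eq_mul, map_smul_eq_mul, Real.norm_of_nonneg hl0.le,
    Real.norm_of_nonneg (sub_pos.2 hl1).le] at htriangle
  show t < N (l • x + (1 - l) • y)
  nlinarith [mul_lt_mul_of_pos_left hx hl0, mul_le_mul_of_nonneg_left hy (sub_pos.2 hl1).le]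

theorem measureReal_lt_seminorm_le_half_rpow [IsProbabilityMeasure μ]
    (hμ : SatisfiesPrekopaLeindler μ) (N : Seminorm ℝ E) (hN : Measurable N) {t : ℝ}
    (ht : μ.real {x | t < N x} ≤ 1 / 3) {s : ℝ} (hs : 1 < s) :
    μ.real {x | s * t < N x} ≤ (1 / 2) ^ ((s + 1) / 2) := by
  set l := 2 / (s + 1)
  have hl0 : 0 < l := by positivity
  have hl1 : l < 1 := by rw [div_lt_one (by positivity)]; linarith
  have hθ : 2 / 3 ≤ μ.real {x | N x ≤ t} := by
    have hcompl : {x | N x ≤ t} = {x | t < N x}ᶜ := by ext; simp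
    rw [hcompl, probReal_compl_eq_one_sub (measurableSet_lt measurable_const hN)]
    linarith
  set a := μ.real {x | s * t < N x}
  set θ := μ.real {x | N x ≤ t}
  have hborell : a ^ l * θ ^ (1 - l) ≤ 1 / 3 := by
    refine le_trans ?_ ht
    have := toReal_mono (measure_ne_top _ _) (hμ.measure_lt_seminorm_rpow_mul_le N hN t hs)
    rwa [toReal_mul, ← toReal_rpow, ← toReal_rpow] at this
  have hθl : 2 / 3 ≤ θ ^ (1 - l) :=
    hθ.trans (Real.self_le_rpow_of_le_one (by linarith) measureReal_le_one (by linarith))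
  have ha : 0 ≤ a := measureReal_nonneg
  have hal : a ^ l ≤ 1 / 2 := by nlinarith [Real.rpow_nonneg ha l]
  calc a = (a ^ l) ^ (1 / l) := by
        rw [← Real.rpow_mul ha, mul_one_div_cancel hl0.ne', Real.rpow_one]
    _ ≤ (1 / 2) ^ (1 / l) := by gcongr
    _ = (1 / 2) ^ ((s + 1) / 2) := by rw [one_div_div]

open Real in
theorem measureReal_lt_seminorm_le_two_mul_exp [IsProbabilityMeasure μ]
    (hμ : SatisfiesPrekopaLeindler μ) (N : Seminorm ℝ E) (hN : Measurable N) {t : ℝ}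
    (ht0 : 0 < t) (ht : μ.real {x | t < N x} ≤ 1 / 3) (u : ℝ) :
    μ.real {x | u < N x} ≤ 2 * exp (-(Real.log 2 / (2 * t)) * u) := by
  have hlog : 0 < Real.log 2 := Real.log_pos one_lt_two
  rcases le_or_gt u t with hut | htu
  · calc μ.real {x | u < N x} ≤ 1 := measureReal_le_one
      _ = 2 * exp (-Real.log 2) := by rw [exp_neg, Real.exp_log two_pos]; norm_num
      _ ≤ 2 * exp (-(Real.log 2 / (2 * t)) * u) := by
        gcongr
        rw [neg_mul, neg_le_neg_iff, div_mul_eq_mul_div, div_le_iff₀ (by positivity)]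
        nlinarith
  · have hs : 1 < u / t := (one_lt_div ht0).2 htu
    calc μ.real {x | u < N x} = μ.real {x | u / t * t < N x} := by
          rw [div_mul_cancel₀ _ ht0.ne']
      _ ≤ (1 / 2) ^ ((u / t + 1) / 2) := hμ.measureReal_lt_seminorm_le_half_rpow N hN ht hs
      _ ≤ (1 / 2) ^ (u / t / 2) := by
        apply Real.rpow_le_rpow_of_exponent_ge (by norm_num) (by norm_num)
        linarith
      _ = exp (-(Real.log 2 / (2 * t)) * u) := by
        rw [Real.rpow_def_of_pos (by norm_num), one_div, Real.log_inv]
        congr 1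
        field_simp
      _ ≤ 2 * exp (-(Real.log 2 / (2 * t)) * u) := by
        linarith [exp_pos (-(Real.log 2 / (2 * t)) * u)]

open Real in
theorem integral_rpow_seminorm_le [IsProbabilityMeasure μ] (hμ : SatisfiesPrekopaLeindler μ)
    (N : Seminorm ℝ E) (hN : Measurable N) (hNi : Integrable N μ) {p : ℝ} (hp : 1 ≤ p) :
    (∫ x, N x ^ p ∂μ) ^ (1 / p) ≤ 36 * p * ∫ x, N x ∂μ := by
  have hp0 : 0 < p := by linarith
  have hN0 : 0 ≤ᵐ[μ] fun x => N x := ae_of_all _ (apply_nonneg N)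
  set m := ∫ x, N x ∂μ
  have hm0 : 0 ≤ m := integral_nonneg (apply_nonneg N)
  rcases hm0.eq_or_lt with hm | hm
  · have hNp : (fun x => N x ^ p) =ᵐ[μ] 0 := by
      filter_upwards [(integral_eq_zero_iff_of_nonneg (apply_nonneg N) hNi).1 hm.symm] with x hx
      simp [show N x = 0 from hx, hp0.ne']
    rw [integral_congr_ae hNp, ← hm]
    simp [hp0.ne']
  have hmarkov : μ.real {x | 3 * m < N x} ≤ 1 / 3 := by
    have hmul_meas := mul_meas_ge_le_integral_of_nonneg hN0 hNi (3 * m)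
    have hsub : μ.real {x | 3 * m < N x} ≤ μ.real {x | 3 * m ≤ N x} :=
      measureReal_mono fun x (hx : 3 * m < N x) => hx.le
    nlinarith
  have hlog : 2 / 3 < Real.log 2 := by linarith [Real.log_two_gt_d9]
  set β := Real.log 2 / (2 * (3 * m))
  have hβ : 0 < β := by positivity
  have hmoment := lintegral_rpow_le_of_meas_lt_le_two_mul_exp hN0 hN.aemeasurable hβ hp
    fun t _ => by
      rw [← ofReal_measureReal]
      exact ofReal_le_ofReal
        (hμ.measureReal_lt_seminorm_le_two_mul_exp N hN (by positivity) hmarkov t)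
  have hint : ∫ x, N x ^ p ∂μ ≤ 2 * (2 * p / β) ^ p := by
    rw [integral_eq_lintegral_of_nonneg_ae (ae_of_all _ fun x => by positivity)
      (hN.pow_const p).aestronglyMeasurable]
    exact toReal_le_of_le_ofReal (by positivity) hmoment
  calc (∫ x, N x ^ p ∂μ) ^ (1 / p) ≤ (2 * (2 * p / β) ^ p) ^ (1 / p) := by
        gcongr
    _ = 2 ^ (1 / p) * (2 * p / β) := by
        rw [Real.mul_rpow two_pos.le (by positivity), ← Real.rpow_mul (by positivity),
          mul_one_div_cancel hp0.ne', Real.rpow_one]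
    _ ≤ 2 * (2 * p / β) := by
        gcongr
        exact Real.rpow_le_self_of_one_le one_le_two (by rw [div_le_one hp0]; exact hp)
    _ = 24 * p * m / Real.log 2 := by
        simp only [β]
        field_simp
        ring
    _ ≤ 36 * p * m := by
        rw [div_le_iff₀ (by linarith)]
        nlinarith [mul_pos hp0 hm]

end SatisfiesPrekopaLeindler

/-- Kahane–Khinchine-type inequality: for a convex body `K` of volume 1, a seminorm
`|·|` and `p ≥ 1`, we have `(∫_K |x|^p dx)^{1/p} ≤ C·p·∫_K |x| dx` for an absolute
constant `C ≥ 1`. -/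
theorem kahane_khinchine_seminorm :
    ∃ C : ℝ, 1 ≤ C ∧ ∀ (n : ℕ) (K : Set (EuclideanSpace ℝ (Fin n))),
      IsCompact K → Convex ℝ K → volume K = 1 →
      ∀ N : Seminorm ℝ (EuclideanSpace ℝ (Fin n)), ∀ p : ℝ, 1 ≤ p →
        (∫ x in K, N x ^ p) ^ (1 / p) ≤ C * p * ∫ x in K, N x := by
  refine ⟨36, by norm_num, fun n K hK hKc hK1 N p hp => ?_⟩
  have : IsProbabilityMeasure (volume.restrict K) := ⟨by rw [Measure.restrict_apply_univ, hK1]⟩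
  have hN : Continuous N := N.convexOn.locallyLipschitz.continuous
  exact ((EuclideanSpace.satisfiesPrekopaLeindler_volume n).restrict hKc hK.measurableSet
    ).integral_rpow_seminorm_le N hN.measurable (hN.continuousOn.integrableOn_compact hK) hp
end
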